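/- Theorem 1 (asymptotic convergence of the LMPC closed loop). Let A be an n×n real matrix, B an n×m real matrix, X ⊆ ℝ^n a compact convex set, U ⊆ ℝ^m a compact convex set, x_F ∈ X, and h : ℝ^n × ℝ^m → ℝ continuous, jointly convex, nonnegative, with h(x, u) > 0 whenever x ≠ x_F and u ∈ U. Let I be a finite nonempty index set with stored states z : I → ℝ^n satisfying z i ∈ X, stored inputs v : I → ℝ^m with v i ∈ U, a successor map σ : I → I with z (σ i) = A (z i) + B (v i), and stored costs c : I → ℝ with c i ≥ 0 and c i = h(z i, v i) + c (σ i) for all i; let p be the barycentric cost function from z and c, CS = convexHull ℝ {z i : i ∈ I}, and Q the LMPC value function with horizon N ≥ 1. Let (x_t)_{t∈ℕ}, (u_t)_{t∈ℕ} be closed-loop sequences such that x_0 is a feasible state, x_{t+1} = A x_t + B u_t, and for every t there exists a feasible solution for initial state x_t attaining Q(x_t) whose first input is u_t. Then x_t ∈ X for all t ≥ 1 and x_t → x_F as t → ∞. -/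

import Mathlib

/-- The barycentric cost function built from stored points `z` and stored costs `c`:
`p(x) = sInf { ∑ i, λ i * c i : λ ≥ 0, ∑ λ = 1, ∑ λ • z = x }`. -/
noncomputable def barycentric {n : ℕ} {ι : Type*} [Fintype ι]
    (z : ι → Fin n → ℝ) (c : ι → ℝ) (x : Fin n → ℝ) : ℝ :=
  sInf {s : ℝ | ∃ lam : ι → ℝ, (∀ i, 0 ≤ lam i) ∧ (∑ i, lam i) = 1 ∧
    (∑ i, lam i • z i) = x ∧ s = ∑ i, lam i * c i}

/-- Feasibility of the LMPC finite-time optimal control problem with horizon `N` at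
initial state `x`. -/
def Feasible {n m : ℕ} (A : Matrix (Fin n) (Fin n) ℝ) (B : Matrix (Fin n) (Fin m) ℝ)
    (X : Set (Fin n → ℝ)) (U : Set (Fin m → ℝ)) (CS : Set (Fin n → ℝ)) (N : ℕ)
    (x : Fin n → ℝ) (u : ℕ → Fin m → ℝ) (xs : ℕ → Fin n → ℝ) : Prop :=
  xs 0 = x ∧ (∀ k < N, xs (k + 1) = A.mulVec (xs k) + B.mulVec (u k)) ∧
    (∀ k < N, xs k ∈ X) ∧ (∀ k < N, u k ∈ U) ∧ xs N ∈ CS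

/-- The LMPC value function `Q` with horizon `N`, stage cost `h`, terminal set `CS`
and terminal cost `p`. -/
noncomputable def lmpcValue {n m : ℕ} (A : Matrix (Fin n) (Fin n) ℝ)
    (B : Matrix (Fin n) (Fin m) ℝ) (X : Set (Fin n → ℝ)) (U : Set (Fin m → ℝ))
    (CS : Set (Fin n → ℝ)) (N : ℕ) (h : (Fin n → ℝ) → (Fin m → ℝ) → ℝ)
    (p : (Fin n → ℝ) → ℝ) (x : Fin n → ℝ) : ℝ :=
  sInf {s : ℝ | ∃ u xs, Feasible A B X U CS N x u xs ∧
    s = (∑ k ∈ Finset.range N, h (xs k) (u k)) + p (xs N)}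

/-!
The barycentric cost is a control Lyapunov function on the convex safe set: from a state
`∑ λ i • z i` the input `∑ λ i • v i` leads to `∑ λ i • z (σ i)`, by convexity at stage cost at most
`∑ λ i * h (z i) (v i)`, and the recursion `c i = h (z i) (v i) + c (σ i)` makes the stage and
terminal costs add up to `∑ λ i * c i`. Dropping the first step of an optimal solution and
appending this input is therefore feasible, which gives `Q (x (t+1)) + h (x t) (u t) ≤ Q (x t)`.
As `Q ≥ 0` the stage costs are summable, hence tend to `0`, and since `h` is continuous and
positive away from `xF` on the compact set `X × U`, the states converge to `xF`.
-/

open Finset Filter Topology Matrix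

lemma sum_fiberwise_smul {ι κ M : Type*} [Fintype ι] [Fintype κ] [DecidableEq ι]
    [AddCommMonoid M] [Module ℝ M] (g : κ → ι) (lam : κ → ℝ) (f : ι → M) :
    ∑ j, (∑ k with g k = j, lam k) • f j = ∑ k, lam k • f (g k) := by
  rw [← Finset.sum_fiberwise Finset.univ g fun k => lam k • f (g k)]
  refine Finset.sum_congr rfl fun j _ => ?_
  rw [Finset.sum_smul]
  exact Finset.sum_congr rfl fun k hk => by rw [(Finset.mem_filter.mp hk).2]

lemma exists_sum_smul_eq_of_mem_convexHull_range {E ι : Type*} [AddCommGroup E] [Module ℝ E]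
    [Fintype ι] {z : ι → E} {y : E} (hy : y ∈ convexHull ℝ (Set.range z)) :
    ∃ lam : ι → ℝ, (∀ i, 0 ≤ lam i) ∧ ∑ i, lam i = 1 ∧ ∑ i, lam i • z i = y := by
  classical
  rw [convexHull_range_eq_exists_affineCombination] at hy
  obtain ⟨s, w, hw₀, hw₁, rfl⟩ := hy
  refine ⟨fun i => if i ∈ s then w i else 0, fun i => ?_, ?_, ?_⟩
  · dsimp only
    split_ifs with hi
    exacts [hw₀ i hi, le_rfl]
  · rwa [Finset.sum_ite_mem, Finset.univ_inter]
  · simp only [Finset.affineCombination_eq_linear_combination s z w hw₁, ite_smul, zero_smul,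
      Finset.sum_ite_mem, Finset.univ_inter]

section Barycentric

variable {n : ℕ} {ι : Type*} [Fintype ι] {z : ι → Fin n → ℝ} {c : ι → ℝ}

lemma barycentric_nonneg (hc : ∀ i, 0 ≤ c i) (y : Fin n → ℝ) : 0 ≤ barycentric z c y :=
  Real.sInf_nonneg <| by
    rintro s ⟨lam, hlam₀, -, -, rfl⟩
    exact Finset.sum_nonneg fun i _ => mul_nonneg (hlam₀ i) (hc i)

lemma barycentric_le {lam : ι → ℝ} (hc : ∀ i, 0 ≤ c i) (hlam₀ : ∀ i, 0 ≤ lam i)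
    (hlam₁ : ∑ i, lam i = 1) :
    barycentric z c (∑ i, lam i • z i) ≤ ∑ i, lam i * c i := by
  refine csInf_le ⟨0, ?_⟩ ⟨lam, hlam₀, hlam₁, rfl, rfl⟩
  rintro s ⟨l, hl₀, -, -, rfl⟩
  exact Finset.sum_nonneg fun i _ => mul_nonneg (hl₀ i) (hc i)

lemma barycentric_sum_comp_le {κ : Type*} [Fintype κ] {g : κ → ι} {lam : κ → ℝ}
    (hc : ∀ i, 0 ≤ c i) (hlam₀ : ∀ k, 0 ≤ lam k) (hlam₁ : ∑ k, lam k = 1) :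
    barycentric z c (∑ k, lam k • z (g k)) ≤ ∑ k, lam k * c (g k) := by
  let _ := Classical.decEq ι
  calc barycentric z c (∑ k, lam k • z (g k))
      = barycentric z c (∑ j, (∑ k with g k = j, lam k) • z j) := by rw [sum_fiberwise_smul]
    _ ≤ ∑ j, (∑ k with g k = j, lam k) * c j :=
      barycentric_le hc (fun j => Finset.sum_nonneg fun k _ => hlam₀ k)
        (by rwa [Finset.sum_fiberwise])
    _ = ∑ k, lam k * c (g k) := sum_fiberwise_smul g lam c

lemma exists_weights_lt_barycentric_add {y : Fin n → ℝ} (hy : y ∈ convexHull ℝ (Set.range z))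
    {ε : ℝ} (hε : 0 < ε) :
    ∃ lam : ι → ℝ, (∀ i, 0 ≤ lam i) ∧ ∑ i, lam i = 1 ∧ ∑ i, lam i • z i = y ∧
      ∑ i, lam i * c i < barycentric z c y + ε := by
  obtain ⟨lam, hlam₀, hlam₁, hlam⟩ := exists_sum_smul_eq_of_mem_convexHull_range hy
  obtain ⟨_, ⟨l, hl₀, hl₁, hl, rfl⟩, hlt⟩ := Real.lt_sInf_add_pos (s := {s | ∃ lam : ι → ℝ,
    (∀ i, 0 ≤ lam i) ∧ ∑ i, lam i = 1 ∧ ∑ i, lam i • z i = y ∧ s = ∑ i, lam i * c i})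
    ⟨_, lam, hlam₀, hlam₁, hlam, rfl⟩ hε
  exact ⟨l, hl₀, hl₁, hl, hlt⟩

end Barycentric

section LMPC

variable {n m : ℕ} {A : Matrix (Fin n) (Fin n) ℝ} {B : Matrix (Fin n) (Fin m) ℝ}
  {X : Set (Fin n → ℝ)} {U : Set (Fin m → ℝ)} {CS : Set (Fin n → ℝ)} {N : ℕ}
  {h : (Fin n → ℝ) → (Fin m → ℝ) → ℝ} {p : (Fin n → ℝ) → ℝ}
  {x : Fin n → ℝ} {us : ℕ → Fin m → ℝ} {xs : ℕ → Fin n → ℝ}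

lemma lmpcValue_le_cost (hh : ∀ x u, 0 ≤ h x u) (hp : ∀ y, 0 ≤ p y)
    (hfeas : Feasible A B X U CS N x us xs) :
    lmpcValue A B X U CS N h p x ≤ ∑ k ∈ range N, h (xs k) (us k) + p (xs N) := by
  refine csInf_le ⟨0, ?_⟩ ⟨us, xs, hfeas, rfl⟩
  rintro s ⟨-, -, -, rfl⟩
  exact add_nonneg (Finset.sum_nonneg fun k _ => hh _ _) (hp _)

lemma lmpcValue_nonneg (hh : ∀ x u, 0 ≤ h x u) (hp : ∀ y, 0 ≤ p y) (x : Fin n → ℝ) :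
    0 ≤ lmpcValue A B X U CS N h p x :=
  Real.sInf_nonneg <| by
    rintro s ⟨-, -, -, rfl⟩
    exact add_nonneg (Finset.sum_nonneg fun k _ => hh _ _) (hp _)

lemma Feasible.shift (hfeas : Feasible A B X U CS (N + 1) x us xs) (hCS : CS ⊆ X)
    {w : Fin m → ℝ} (hw : w ∈ U) (hnext : A *ᵥ xs (N + 1) + B *ᵥ w ∈ CS) :
    Feasible A B X U CS (N + 1) (xs 1) (fun k => if k < N then us (k + 1) else w)
      (fun k => if k ≤ N then xs (k + 1) else A *ᵥ xs (N + 1) + B *ᵥ w) := by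
  obtain ⟨-, hdyn, hX, hU, hterm⟩ := hfeas
  refine ⟨by simp, fun k hk => ?_, fun k hk => ?_, fun k hk => ?_, by simpa using hnext⟩
  · rcases Nat.lt_succ_iff_lt_or_eq.mp hk with hk | rfl
    · simpa [hk, Nat.succ_le_of_lt hk, hk.le] using hdyn (k + 1) (by omega)
    · simp
  · rcases Nat.lt_succ_iff_lt_or_eq.mp hk with hk | rfl
    · simpa [hk.le] using hX (k + 1) (by omega)
    · simpa using hCS hterm
  · rcases Nat.lt_succ_iff_lt_or_eq.mp hk with hk | rfl
    · simpa [hk] using hU (k + 1) (by omega)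
    · simpa using hw

lemma lmpcValue_add_le_cost (hCS : CS ⊆ X) (hh : ∀ x u, 0 ≤ h x u) (hp : ∀ y, 0 ≤ p y)
    (hstep : ∀ y ∈ CS, ∀ ε > 0, ∃ w ∈ U, A *ᵥ y + B *ᵥ w ∈ CS ∧
      h y w + p (A *ᵥ y + B *ᵥ w) < p y + ε)
    (hfeas : Feasible A B X U CS (N + 1) x us xs) :
    lmpcValue A B X U CS (N + 1) h p (xs 1) + h x (us 0) ≤
      ∑ k ∈ range (N + 1), h (xs k) (us k) + p (xs (N + 1)) := by
  refine le_of_forall_pos_le_add fun ε hε => ?_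
  obtain ⟨w, hw, hnext, hlt⟩ := hstep _ hfeas.2.2.2.2 ε hε
  have hQ := lmpcValue_le_cost hh hp (hfeas.shift hCS hw hnext)
  have hshift : ∑ k ∈ range N, h (if k ≤ N then xs (k + 1) else A *ᵥ xs (N + 1) + B *ᵥ w)
      (if k < N then us (k + 1) else w) = ∑ k ∈ range N, h (xs (k + 1)) (us (k + 1)) :=
    Finset.sum_congr rfl fun k hk => by
      rw [Finset.mem_range] at hk
      rw [if_pos hk.le, if_pos hk]
  rw [Finset.sum_range_succ, hshift] at hQ
  rw [Finset.sum_range_succ', ← hfeas.1]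
  simp only [le_refl, if_true, lt_irrefl, if_false, Nat.not_succ_le_self] at hQ
  linarith

end LMPC

lemma exists_step_barycentric_lt {n m : ℕ} {ι : Type*} [Fintype ι]
    {A : Matrix (Fin n) (Fin n) ℝ} {B : Matrix (Fin n) (Fin m) ℝ} {U : Set (Fin m → ℝ)}
    {h : (Fin n → ℝ) → (Fin m → ℝ) → ℝ} {z : ι → Fin n → ℝ} {v : ι → Fin m → ℝ} {σ : ι → ι}
    {c : ι → ℝ} (hUconv : Convex ℝ U)
    (hconv : ConvexOn ℝ Set.univ (fun q : (Fin n → ℝ) × (Fin m → ℝ) => h q.1 q.2))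
    (hv : ∀ i, v i ∈ U) (hσ : ∀ i, z (σ i) = A *ᵥ z i + B *ᵥ v i) (hcpos : ∀ i, 0 ≤ c i)
    (hc : ∀ i, c i = h (z i) (v i) + c (σ i)) {y : Fin n → ℝ}
    (hy : y ∈ convexHull ℝ (Set.range z)) {ε : ℝ} (hε : 0 < ε) :
    ∃ w ∈ U, A *ᵥ y + B *ᵥ w ∈ convexHull ℝ (Set.range z) ∧
      h y w + barycentric z c (A *ᵥ y + B *ᵥ w) < barycentric z c y + ε := by
  obtain ⟨lam, hlam₀, hlam₁, rfl, hlt⟩ := exists_weights_lt_barycentric_add (c := c) hy hε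
  set w := ∑ i, lam i • v i
  have hnext : A *ᵥ (∑ i, lam i • z i) + B *ᵥ w = ∑ i, lam i • z (σ i) := by
    simp only [w, Matrix.mulVec_sum, Matrix.mulVec_smul, hσ, smul_add, Finset.sum_add_distrib]
  have hjensen : h (∑ i, lam i • z i) w ≤ ∑ i, lam i * h (z i) (v i) := by
    simpa [Prod.fst_sum, Prod.snd_sum] using
      hconv.map_sum_le (t := Finset.univ) (p := fun i => (z i, v i)) (fun i _ => hlam₀ i) hlam₁
        (fun i _ => Set.mem_univ _)
  have hterminal := barycentric_sum_comp_le (z := z) (c := c) (g := σ) hcpos hlam₀ hlam₁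
  have hbellman : ∑ i, lam i * c i = ∑ i, lam i * h (z i) (v i) + ∑ i, lam i * c (σ i) := by
    simp only [← Finset.sum_add_distrib, ← mul_add, ← hc]
  refine ⟨w, hUconv.sum_mem (fun i _ => hlam₀ i) hlam₁ fun i _ => hv i, ?_, ?_⟩
  · rw [hnext]
    exact (convex_convexHull ℝ _).sum_mem (fun i _ => hlam₀ i) hlam₁
      fun i _ => subset_convexHull ℝ _ ⟨σ i, rfl⟩
  · rw [hnext]
    linarith

lemma tendsto_zero_of_add_le_of_nonneg {V s : ℕ → ℝ} (hV : ∀ t, 0 ≤ V t) (hs : ∀ t, 0 ≤ s t)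
    (hdecr : ∀ t, V (t + 1) + s t ≤ V t) : Tendsto s atTop (𝓝 0) := by
  have hsum : ∀ T, ∑ t ∈ range T, s t + V T ≤ V 0 := by
    intro T
    induction T with
    | zero => simp
    | succ T ih => rw [Finset.sum_range_succ]; linarith [hdecr T]
  exact (summable_of_sum_range_le (c := V 0) hs fun T => by
    linarith [hsum T, hV T]).tendsto_atTop_zero

lemma tendsto_of_tendsto_zero_of_pos {α β : Type*} [MetricSpace α] [TopologicalSpace β]
    {X : Set α} {U : Set β} (hX : IsCompact X) (hU : IsCompact U) {f : α → β → ℝ}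
    (hf : Continuous (fun q : α × β => f q.1 q.2)) {a : α}
    (hpos : ∀ x u, x ≠ a → u ∈ U → 0 < f x u)
    {x : ℕ → α} {u : ℕ → β} (hxX : ∀ t, x t ∈ X) (huU : ∀ t, u t ∈ U)
    (hlim : Tendsto (fun t => f (x t) (u t)) atTop (𝓝 0)) : Tendsto x atTop (𝓝 a) := by
  refine Metric.tendsto_atTop.mpr fun ε hε => ?_
  set K := (X ∩ {y | ε ≤ dist y a}) ×ˢ U
  have hK : IsCompact K :=
    (hX.inter_right (isClosed_le continuous_const (continuous_id.dist continuous_const))).prod hU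
  obtain ⟨δ, hδ, hδK⟩ := hK.exists_forall_le' hf.continuousOn fun q hq =>
    hpos q.1 q.2 (fun he => by simpa [he, hε.not_ge] using hq.1.2) hq.2
  obtain ⟨T, hT⟩ := eventually_atTop.mp (hlim.eventually_lt_const hδ)
  refine ⟨T, fun t ht => not_le.mp fun hfar => ?_⟩
  exact (hT t ht).not_ge (hδK (x t, u t) ⟨⟨hxX t, hfar⟩, huU t⟩)

theorem lmpc_closed_loop_convergence_general
    {n m : ℕ} {ι : Type*} [Fintype ι]
    (A : Matrix (Fin n) (Fin n) ℝ) (B : Matrix (Fin n) (Fin m) ℝ)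
    (X : Set (Fin n → ℝ)) (hXc : IsCompact X) (hXconv : Convex ℝ X)
    (U : Set (Fin m → ℝ)) (hUc : IsCompact U) (hUconv : Convex ℝ U)
    (xF : Fin n → ℝ)
    (h : (Fin n → ℝ) → (Fin m → ℝ) → ℝ)
    (hcont : Continuous (fun q : (Fin n → ℝ) × (Fin m → ℝ) => h q.1 q.2))
    (hconv : ConvexOn ℝ Set.univ (fun q : (Fin n → ℝ) × (Fin m → ℝ) => h q.1 q.2))
    (hnonneg : ∀ x u, 0 ≤ h x u)
    (hposdef : ∀ x u, x ≠ xF → u ∈ U → 0 < h x u)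
    (z : ι → Fin n → ℝ) (hz : ∀ i, z i ∈ X)
    (v : ι → Fin m → ℝ) (hv : ∀ i, v i ∈ U)
    (σ : ι → ι) (hσ : ∀ i, z (σ i) = A.mulVec (z i) + B.mulVec (v i))
    (c : ι → ℝ) (hcpos : ∀ i, 0 ≤ c i) (hc : ∀ i, c i = h (z i) (v i) + c (σ i))
    (N : ℕ) (hN : 1 ≤ N)
    -- the closed-loop sequences
    (x : ℕ → Fin n → ℝ) (u : ℕ → Fin m → ℝ)
    (hdyn : ∀ t, x (t + 1) = A.mulVec (x t) + B.mulVec (u t))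
    (hcl : ∀ t, ∃ us xs,
      Feasible A B X U (convexHull ℝ (Set.range z)) N (x t) us xs ∧
      us 0 = u t ∧
      (∑ k ∈ Finset.range N, h (xs k) (us k)) + barycentric z c (xs N) =
        lmpcValue A B X U (convexHull ℝ (Set.range z)) N h (barycentric z c) (x t)) :
    (∀ t, 1 ≤ t → x t ∈ X) ∧
      Filter.Tendsto x Filter.atTop (nhds xF) := by
  obtain ⟨M, rfl⟩ : ∃ M, N = M + 1 := ⟨N - 1, by omega⟩
  set CS := convexHull ℝ (Set.range z)
  set Q := lmpcValue A B X U CS (M + 1) h (barycentric z c)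
  have hCSX : CS ⊆ X := convexHull_min (Set.range_subset_iff.mpr hz) hXconv
  have hpnn := barycentric_nonneg (z := z) hcpos
  have hxX : ∀ t, x t ∈ X := fun t => by
    obtain ⟨us, xs, ⟨hxs0, -, hX, -⟩, -⟩ := hcl t
    exact hxs0 ▸ hX 0 M.succ_pos
  have huU : ∀ t, u t ∈ U := fun t => by
    obtain ⟨us, xs, ⟨-, -, -, hU, -⟩, hus0, -⟩ := hcl t
    exact hus0 ▸ hU 0 M.succ_pos
  have hdecr : ∀ t, Q (x (t + 1)) + h (x t) (u t) ≤ Q (x t) := fun t => by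
    obtain ⟨us, xs, hfeas, hus0, hopt⟩ := hcl t
    have hnext : x (t + 1) = xs 1 := by
      rw [hdyn, hfeas.2.1 0 M.succ_pos, hfeas.1, hus0]
    rw [hnext, ← hus0, ← hopt]
    exact lmpcValue_add_le_cost hCSX hnonneg hpnn
      (fun y hy ε hε => exists_step_barycentric_lt hUconv hconv hv hσ hcpos hc hy hε) hfeas
  refine ⟨fun t _ => hxX t, tendsto_of_tendsto_zero_of_pos hXc hUc hcont hposdef hxX huU ?_⟩
  exact tendsto_zero_of_add_le_of_nonneg (fun t => lmpcValue_nonneg hnonneg hpnn _)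
    (fun t => hnonneg _ _) hdecr

/-- Theorem 1, asymptotic convergence of the LMPC closed loop: the
closed-loop trajectory remains in the state constraint set and converges to the
equilibrium `x_F`. -/
theorem lmpc_closed_loop_convergence
    {n m : ℕ} {ι : Type*} [Fintype ι] [Nonempty ι]
    (A : Matrix (Fin n) (Fin n) ℝ) (B : Matrix (Fin n) (Fin m) ℝ)
    (X : Set (Fin n → ℝ)) (hXc : IsCompact X) (hXconv : Convex ℝ X)
    (U : Set (Fin m → ℝ)) (hUc : IsCompact U) (hUconv : Convex ℝ U)
    (xF : Fin n → ℝ) (hxF : xF ∈ X)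
    (h : (Fin n → ℝ) → (Fin m → ℝ) → ℝ)
    (hcont : Continuous (fun q : (Fin n → ℝ) × (Fin m → ℝ) => h q.1 q.2))
    (hconv : ConvexOn ℝ Set.univ (fun q : (Fin n → ℝ) × (Fin m → ℝ) => h q.1 q.2))
    (hnonneg : ∀ x u, 0 ≤ h x u)
    (hposdef : ∀ x u, x ≠ xF → u ∈ U → 0 < h x u)
    (z : ι → Fin n → ℝ) (hz : ∀ i, z i ∈ X)
    (v : ι → Fin m → ℝ) (hv : ∀ i, v i ∈ U)
    (σ : ι → ι) (hσ : ∀ i, z (σ i) = A.mulVec (z i) + B.mulVec (v i))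
    (c : ι → ℝ) (hcpos : ∀ i, 0 ≤ c i) (hc : ∀ i, c i = h (z i) (v i) + c (σ i))
    (N : ℕ) (hN : 1 ≤ N)
    -- the closed-loop sequences
    (x : ℕ → Fin n → ℝ) (u : ℕ → Fin m → ℝ)
    (hx0 : ∃ u0 xs0, Feasible A B X U (convexHull ℝ (Set.range z)) N (x 0) u0 xs0)
    (hdyn : ∀ t, x (t + 1) = A.mulVec (x t) + B.mulVec (u t))
    (hcl : ∀ t, ∃ us xs,
      Feasible A B X U (convexHull ℝ (Set.range z)) N (x t) us xs ∧
      us 0 = u t ∧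
      (∑ k ∈ Finset.range N, h (xs k) (us k)) + barycentric z c (xs N) =
        lmpcValue A B X U (convexHull ℝ (Set.range z)) N h (barycentric z c) (x t)) :
    (∀ t, 1 ≤ t → x t ∈ X) ∧
      Filter.Tendsto x Filter.atTop (nhds xF) :=
  lmpc_closed_loop_convergence_general A B X hXc hXconv U hUc hUconv xF h hcont hconv hnonneg
    hposdef z hz v hv σ hσ c hcpos hc N hN x u hdyn hcl
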